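/- arXiv:2305.01350 — 2 statements merged into one kernel-verified Lean document; each statement's English description precedes it below -/
import Mathlib

section
/- Let κ₀ ∈ (0,1], let (Ω, 𝒜, ℙ) be a probability space and let p, q : Ω → [0,1] be measurable. Then 0 ≤ 𝔼[d_{κ₀}(f_p, f_q)] ≤ 1 + 1/κ₀, and the upper bound 1 + 1/κ₀ is attained if and only if |p − q| = 1 ℙ-almost everywhere. -/
open MeasureTheory Filter Real
open scoped ENNReal BigOperators

noncomputable section

/-- The Bernoulli density with success probability `p`: `bern p true = p`,
`bern p false = 1 - p`. -/
def bern (p : ℝ) (y : Bool) : ℝ := if y then p else 1 - p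

/-- The density power divergence `d_κ(f_p, f_q)` between the Bernoulli densities with
success probabilities `p` and `q`, for tuning parameter `κ > 0`. -/
def dpd (κ p q : ℝ) : ℝ :=
  ∑ y : Bool, (bern q y ^ (1 + κ) - (1 + 1 / κ) * bern p y * bern q y ^ κ
    + (1 / κ) * bern p y ^ (1 + κ))

lemma dpd_expand (κ p q : ℝ) : dpd κ p q =
    (q ^ (1 + κ) + (1 - q) ^ (1 + κ))
    - (1 + 1 / κ) * (p * q ^ κ + (1 - p) * (1 - q) ^ κ)
    + (1 / κ) * (p ^ (1 + κ) + (1 - p) ^ (1 + κ)) := by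
  simp [dpd, bern, Fintype.sum_bool]
  ring

lemma young_term {κ a b : ℝ} (hκ : 0 < κ) (ha : 0 ≤ a) (hb : 0 ≤ b) :
    (1 + 1 / κ) * (a * b ^ κ) ≤ b ^ (1 + κ) + (1 / κ) * a ^ (1 + κ) := by
  have h1κ : (0:ℝ) < 1 + κ := by linarith
  have key := Real.geom_mean_le_arith_mean2_weighted
    (by positivity : (0:ℝ) ≤ 1 / (1 + κ)) (by positivity : (0:ℝ) ≤ κ / (1 + κ))
    (Real.rpow_nonneg ha (1 + κ)) (Real.rpow_nonneg hb (1 + κ))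
    (by field_simp)
  rw [← Real.rpow_mul ha, ← Real.rpow_mul hb] at key
  have e1 : (1 + κ) * (1 / (1 + κ)) = 1 := by field_simp
  have e2 : (1 + κ) * (κ / (1 + κ)) = κ := by field_simp
  rw [e1, e2, Real.rpow_one] at key
  have h2 : (0:ℝ) ≤ 1 + 1 / κ := by positivity
  have h3 := mul_le_mul_of_nonneg_left key h2
  calc (1 + 1 / κ) * (a * b ^ κ)
      ≤ (1 + 1 / κ) * (1 / (1 + κ) * a ^ (1 + κ) + κ / (1 + κ) * b ^ (1 + κ)) := h3
    _ = b ^ (1 + κ) + (1 / κ) * a ^ (1 + κ) := by field_simp; ring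

lemma rpow_le_self' {x κ : ℝ} (hx : 0 ≤ x) (hx1 : x ≤ 1) (hκ : 0 < κ) :
    x ^ (1 + κ) ≤ x := by
  rcases eq_or_lt_of_le hx with h | h
  · rw [← h, Real.zero_rpow (by positivity)]
  · calc x ^ (1 + κ) ≤ x ^ (1:ℝ) :=
        Real.rpow_le_rpow_of_exponent_ge h hx1 (by linarith)
      _ = x := Real.rpow_one x

lemma rpow_lt_self' {x κ : ℝ} (hx : 0 < x) (hx1 : x < 1) (hκ : 0 < κ) :
    x ^ (1 + κ) < x := by
  calc x ^ (1 + κ) < x ^ (1:ℝ) :=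
      Real.rpow_lt_rpow_of_exponent_gt hx hx1 (by linarith)
    _ = x := Real.rpow_one x

lemma dpd_bounds {κ p q : ℝ} (hκ : 0 < κ) (hp : p ∈ Set.Icc (0:ℝ) 1)
    (hq : q ∈ Set.Icc (0:ℝ) 1) :
    0 ≤ dpd κ p q ∧ dpd κ p q ≤ 1 + 1 / κ ∧ (dpd κ p q = 1 + 1 / κ ↔ |p - q| = 1) := by
  obtain ⟨hp0, hp1⟩ := hp
  obtain ⟨hq0, hq1⟩ := hq
  have hp0' : (0:ℝ) ≤ 1 - p := by linarith
  have hp1' : (1:ℝ) - p ≤ 1 := by linarith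
  have hq0' : (0:ℝ) ≤ 1 - q := by linarith
  have hq1' : (1:ℝ) - q ≤ 1 := by linarith
  have hκ' : (0:ℝ) < 1 / κ := by positivity
  have hκκ : (0:ℝ) < 1 + 1 / κ := by positivity
  have hu : 0 ≤ p * q ^ κ := mul_nonneg hp0 (Real.rpow_nonneg hq0 κ)
  have hv : 0 ≤ (1 - p) * (1 - q) ^ κ := mul_nonneg hp0' (Real.rpow_nonneg hq0' κ)
  have hA1 : q ^ (1 + κ) + (1 - q) ^ (1 + κ) ≤ 1 := by
    have := rpow_le_self' hq0 hq1 hκ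
    have := rpow_le_self' hq0' hq1' hκ
    linarith
  have hC1 : p ^ (1 + κ) + (1 - p) ^ (1 + κ) ≤ 1 := by
    have := rpow_le_self' hp0 hp1 hκ
    have := rpow_le_self' hp0' hp1' hκ
    linarith
  have hC0 : 0 ≤ p ^ (1 + κ) + (1 - p) ^ (1 + κ) := by positivity
  have hA0 : 0 ≤ q ^ (1 + κ) + (1 - q) ^ (1 + κ) := by positivity
  rw [dpd_expand]
  set A := q ^ (1 + κ) + (1 - q) ^ (1 + κ) with hAdef
  set B := p * q ^ κ + (1 - p) * (1 - q) ^ κ with hBdef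
  set C := p ^ (1 + κ) + (1 - p) ^ (1 + κ) with hCdef
  have hB0 : 0 ≤ B := by positivity
  have hX : 0 ≤ (1 + 1 / κ) * B := mul_nonneg hκκ.le hB0
  have hY : (1 / κ) * C ≤ 1 / κ := by
    have := mul_le_mul_of_nonneg_left hC1 hκ'.le
    simpa using this
  have hY0 : 0 ≤ (1 / κ) * C := mul_nonneg hκ'.le hC0
  have hlow : 0 ≤ A - (1 + 1 / κ) * B + (1 / κ) * C := by
    have y1 := young_term hκ hp0 hq0
    have y2 := young_term hκ hp0' hq0'
    have : (1 + 1 / κ) * B = (1 + 1 / κ) * (p * q ^ κ)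
        + (1 + 1 / κ) * ((1 - p) * (1 - q) ^ κ) := by rw [hBdef]; ring
    rw [this, hAdef, hCdef]
    have hCsplit : (1 / κ) * (p ^ (1 + κ) + (1 - p) ^ (1 + κ))
        = (1 / κ) * p ^ (1 + κ) + (1 / κ) * (1 - p) ^ (1 + κ) := by ring
    linarith [hCsplit]
  refine ⟨hlow, by linarith, ?_, ?_⟩
  · intro heq
    have hAeq : A = 1 := by linarith
    have hYeq : (1 / κ) * C = 1 / κ := by linarith
    have hXeq : (1 + 1 / κ) * B = 0 := by linarith
    have hCeq : C = 1 := by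
      have : (1 / κ) * C = (1 / κ) * 1 := by rw [hYeq, mul_one]
      exact mul_left_cancel₀ hκ'.ne' this
    have hBeq : B = 0 := by
      rcases mul_eq_zero.mp hXeq with h | h
      · exact absurd h hκκ.ne'
      · exact h
    have hueq : p * q ^ κ = 0 := by rw [hBdef] at hBeq; linarith
    have hveq : (1 - p) * (1 - q) ^ κ = 0 := by rw [hBdef] at hBeq; linarith
    have hqext : q = 0 ∨ q = 1 := by
      by_contra h
      push_neg at h
      have h1 : 0 < q := lt_of_le_of_ne hq0 (Ne.symm h.1)
      have h2 : q < 1 := lt_of_le_of_ne hq1 h.2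
      have l1 := rpow_lt_self' h1 h2 hκ
      have l2 := rpow_lt_self' (by linarith : (0:ℝ) < 1 - q) (by linarith) hκ
      rw [hAdef] at hAeq
      linarith
    have hpext : p = 0 ∨ p = 1 := by
      by_contra h
      push_neg at h
      have h1 : 0 < p := lt_of_le_of_ne hp0 (Ne.symm h.1)
      have h2 : p < 1 := lt_of_le_of_ne hp1 h.2
      have l1 := rpow_lt_self' h1 h2 hκ
      have l2 := rpow_lt_self' (by linarith : (0:ℝ) < 1 - p) (by linarith) hκ
      rw [hCdef] at hCeq
      linarith
    rcases hpext with rfl | rfl <;> rcases hqext with rfl | rfl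
    · exfalso; rw [show (1:ℝ) - 0 = 1 by ring, Real.one_rpow] at hveq; norm_num at hveq
    · norm_num
    · norm_num
    · exfalso; rw [Real.one_rpow] at hueq; norm_num at hueq
  · intro habs
    have hpq : (p = 0 ∧ q = 1) ∨ (p = 1 ∧ q = 0) := by
      rcases abs_eq (by norm_num : (0:ℝ) ≤ 1) |>.mp habs with h | h
      · right; constructor <;> linarith
      · left; constructor <;> linarith
    have hz1 : (0:ℝ) ^ (1 + κ) = 0 := Real.zero_rpow (by positivity)
    have hz2 : (0:ℝ) ^ κ = 0 := Real.zero_rpow hκ.ne'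
    rcases hpq with ⟨rfl, rfl⟩ | ⟨rfl, rfl⟩ <;>
      simp [hAdef, hBdef, hCdef, hz1, hz2, Real.one_rpow]

/-- for `κ₀ ∈ (0,1]`, a probability space `(Ω, 𝒜, ℙ)` and measurable
`p, q : Ω → [0,1]`, one has `0 ≤ 𝔼[d_{κ₀}(f_p, f_q)] ≤ 1 + 1/κ₀`, and the upper bound
is attained iff `|p - q| = 1` almost everywhere. -/
theorem expectation_dpd_bounds {Ω : Type*} [MeasurableSpace Ω] (ℙ : Measure Ω)
    [IsProbabilityMeasure ℙ] (κ₀ : ℝ) (hκ : κ₀ ∈ Set.Ioc (0 : ℝ) 1)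
    (p q : Ω → ℝ) (hp : Measurable p) (hq : Measurable q)
    (hp1 : ∀ ω, p ω ∈ Set.Icc (0 : ℝ) 1) (hq1 : ∀ ω, q ω ∈ Set.Icc (0 : ℝ) 1) :
    0 ≤ ∫ ω, dpd κ₀ (p ω) (q ω) ∂ℙ ∧
    (∫ ω, dpd κ₀ (p ω) (q ω) ∂ℙ) ≤ 1 + 1 / κ₀ ∧
    ((∫ ω, dpd κ₀ (p ω) (q ω) ∂ℙ) = 1 + 1 / κ₀ ↔ ∀ᵐ ω ∂ℙ, |p ω - q ω| = 1) := by
  obtain ⟨hκ0, _⟩ := hκ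
  have hbnd := fun ω => dpd_bounds hκ0 (hp1 ω) (hq1 ω)
  have hg : Measurable fun ω => dpd κ₀ (p ω) (q ω) := by
    simp only [dpd_expand]
    fun_prop
  have hint : Integrable (fun ω => dpd κ₀ (p ω) (q ω)) ℙ := by
    refine (integrable_const (1 + 1 / κ₀)).mono' hg.aestronglyMeasurable ?_
    filter_upwards with ω
    rw [Real.norm_eq_abs, abs_of_nonneg (hbnd ω).1]
    exact (hbnd ω).2.1
  have h0 : 0 ≤ ∫ ω, dpd κ₀ (p ω) (q ω) ∂ℙ :=
    integral_nonneg fun ω => (hbnd ω).1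
  have hle : (∫ ω, dpd κ₀ (p ω) (q ω) ∂ℙ) ≤ 1 + 1 / κ₀ := by
    calc (∫ ω, dpd κ₀ (p ω) (q ω) ∂ℙ) ≤ ∫ _, (1 + 1 / κ₀) ∂ℙ :=
        integral_mono hint (integrable_const _) fun ω => (hbnd ω).2.1
      _ = 1 + 1 / κ₀ := by simp
  refine ⟨h0, hle, ?_⟩
  have hzero : (∫ ω, (1 + 1 / κ₀) - dpd κ₀ (p ω) (q ω) ∂ℙ)
      = (1 + 1 / κ₀) - ∫ ω, dpd κ₀ (p ω) (q ω) ∂ℙ := by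
    rw [integral_sub (integrable_const _) hint]
    simp
  have hfi : Integrable (fun ω => (1 + 1 / κ₀) - dpd κ₀ (p ω) (q ω)) ℙ :=
    (integrable_const _).sub hint
  have hnn : 0 ≤ᵐ[ℙ] fun ω => (1 + 1 / κ₀) - dpd κ₀ (p ω) (q ω) :=
    Filter.Eventually.of_forall fun ω => by
      have := (hbnd ω).2.1; simp only [Pi.zero_apply]; linarith
  have hiff := integral_eq_zero_iff_of_nonneg_ae hnn hfi
  constructor
  · intro heq
    have h1 : (∫ ω, (1 + 1 / κ₀) - dpd κ₀ (p ω) (q ω) ∂ℙ) = 0 := by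
      rw [hzero, heq]; ring
    filter_upwards [hiff.mp h1] with ω hω
    have : dpd κ₀ (p ω) (q ω) = 1 + 1 / κ₀ := by
      simp only [Pi.zero_apply] at hω; linarith
    exact (hbnd ω).2.2.mp this
  · intro hae
    have h1 : (∫ ω, (1 + 1 / κ₀) - dpd κ₀ (p ω) (q ω) ∂ℙ) = 0 := by
      rw [hiff]
      filter_upwards [hae] with ω hω
      have := (hbnd ω).2.2.mpr hω
      simp only [Pi.zero_apply]; linarith
    rw [hzero] at h1
    linarith

end
end

section
/- (Quadratic minoration of the population divergence, eq. (A13).) Let κ₀ > 0 and assume the functional logistic model with assumptions (A4), (A5), where additionally H : ℝ → (0,1) is a continuously differentiable, strictly increasing bijection with H' > 0 everywhere and sup_x H'(x) ≤ c₀ < ∞. Then there exist δ > 0, η > 0, L > 0 and n₀ such that for all n ≥ n₀, all β ∈ B([0,1]) with ‖β − β₀‖_∞ < δ, and all κ with |κ − κ₀| < δ: M(β, κ) − M(β̃_{K_n}, κ) ≥ η |π(β, β̃_{K_n})|² − L ‖β̃_{K_n} − β₀‖_{L²} π(β, β̃_{K_n}). -/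
open MeasureTheory Filter Topology Real
open scoped ENNReal BigOperators RealInnerProductSpace

noncomputable section

/-- `L²([0,1])`. -/
abbrev L2 : Type := MeasureTheory.Lp ℝ 2 (MeasureTheory.volume.restrict (Set.Icc (0 : ℝ) 1))

/-- The population divergence criterion `M(β, κ) = 𝔼[d_κ(f_{p(β₀)}, f_{p(β)})]`. -/
def Mpop {Ω : Type*} [MeasurableSpace Ω] (P : Measure Ω) (H : ℝ → ℝ) (X : Ω → L2)
    (β₀ β : L2) (κ : ℝ) : ℝ :=
  ∫ ω, dpd κ (H ⟪X ω, β₀⟫) (H ⟪X ω, β⟫) ∂P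

/-- The prediction error `π(β₁, β₂) = (𝔼|⟨X, β₁ − β₂⟩|²)^{1/2}`. -/
def predErr {Ω : Type*} [MeasurableSpace Ω] (P : Measure Ω) (X : Ω → L2) (g₁ g₂ : L2) : ℝ :=
  Real.sqrt (∫ ω, (⟪X ω, g₁ - g₂⟫ : ℝ) ^ 2 ∂P)

/-
As a function of `q`, the Bernoulli divergence `d_κ(p, q)` has derivative
`w_κ(q) (q - p)` with `w_κ(q) = (1 + κ)(q^(κ-1) + (1-q)^(κ-1))`, and `w_κ` is pinched between
positive constants as long as `q` stays in a compact subinterval of `(0,1)` and `κ` is bounded.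
Integrating along the segment from `p₂` to `p₁` gives
`d_κ(p₀,p₁) - d_κ(p₀,p₂) ≥ c (p₁ - p₂)² - c' |p₂ - p₀| |p₁ - p₂|`.
Since `‖X‖ ≤ C` a.s. and `β`, `β̃` are close to `β₀`, all linear predictors stay in a fixed
interval `[-R, R]`, on which `H` is bi-Lipschitz; with `p = H ⟨X, ·⟩` this gives pointwise
`η ⟨X, β - β̃⟩² - L' |⟨X, β̃ - β₀⟩| |⟨X, β - β̃⟩|` as a lower bound. Finally
`|⟨X, β̃ - β₀⟩| ≤ C ‖β̃ - β₀‖` and `𝔼 |⟨X, β - β̃⟩| ≤ π(β, β̃)`.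
-/

open Set

theorem le_sub_of_hasDerivAt_eq_mul_sub {f w : ℝ → ℝ} {s : Set ℝ} {p m W x y : ℝ}
    (hs : Convex ℝ s) (hx : x ∈ s) (hy : y ∈ s)
    (hf : ∀ q ∈ s, HasDerivAt f (w q * (q - p)) q)
    (hw : ∀ q ∈ s, m ≤ w q ∧ w q ≤ W) (hm : 0 ≤ m) :
    m / 2 * (x - y) ^ 2 - W * (|y - p| * |x - y|) ≤ f x - f y := by
  have hseg : ∀ t ∈ Icc (0 : ℝ) 1, y + t * (x - y) ∈ s := fun t ht =>
    hs.add_smul_sub_mem hy hx ht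
  -- the claim is `φ 0 ≤ φ 1`
  let φ : ℝ → ℝ := fun t =>
    f (y + t * (x - y)) - m / 2 * t ^ 2 * (x - y) ^ 2 + W * (|y - p| * |x - y|) * t
  have hφ : ∀ t ∈ Icc (0 : ℝ) 1, HasDerivAt φ
      (w (y + t * (x - y)) * (y + t * (x - y) - p) * (x - y)
        - m * t * (x - y) ^ 2 + W * (|y - p| * |x - y|)) t := by
    intro t ht
    have hpath : HasDerivAt (fun t : ℝ => y + t * (x - y)) (x - y) t := by
      simpa using ((hasDerivAt_id t).mul_const (x - y)).const_add y
    exact ((((hf _ (hseg t ht)).comp t hpath).sub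
      (((hasDerivAt_pow 2 t).const_mul (m / 2)).mul_const ((x - y) ^ 2))).add
      ((hasDerivAt_id t).const_mul (W * (|y - p| * |x - y|)))).congr_deriv (by ring)
  have hmono : MonotoneOn φ (Icc 0 1) := by
    refine monotoneOn_of_hasDerivWithinAt_nonneg (convex_Icc 0 1)
      (fun t ht => (hφ t ht).continuousAt.continuousWithinAt)
      (fun t ht => (hφ t (interior_subset ht)).hasDerivWithinAt) fun t ht => ?_
    rw [interior_Icc] at ht
    obtain ⟨hwm, hwW⟩ := hw _ (hseg t (Ioo_subset_Icc_self ht))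
    set w' := w (y + t * (x - y))
    have hquad : 0 ≤ (w' - m) * t * (x - y) ^ 2 :=
      mul_nonneg (mul_nonneg (sub_nonneg.2 hwm) ht.1.le) (sq_nonneg _)
    have hcross : -(W * (|y - p| * |x - y|)) ≤ w' * ((y - p) * (x - y)) := by
      rw [neg_le, ← abs_mul]
      calc -(w' * ((y - p) * (x - y))) ≤ |w' * ((y - p) * (x - y))| := neg_le_abs _
        _ = w' * |(y - p) * (x - y)| := by rw [abs_mul, abs_of_nonneg (hm.trans hwm)]
        _ ≤ W * |(y - p) * (x - y)| := by gcongr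
    linarith
  have := hmono (left_mem_Icc.2 zero_le_one) (right_mem_Icc.2 zero_le_one) zero_le_one
  norm_num [φ] at this
  linarith

theorem dpd_eq (κ p q : ℝ) : dpd κ p q =
    (q ^ (1 + κ) - (1 + 1 / κ) * p * q ^ κ + 1 / κ * p ^ (1 + κ))
      + ((1 - q) ^ (1 + κ) - (1 + 1 / κ) * (1 - p) * (1 - q) ^ κ + 1 / κ * (1 - p) ^ (1 + κ)) := by
  simp [dpd, bern, add_comm]

theorem continuous_dpd {κ : ℝ} (hκ : 0 < κ) : Continuous fun x : ℝ × ℝ => dpd κ x.1 x.2 := by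
  have h1 := Real.continuous_rpow_const (by linarith : (0 : ℝ) ≤ 1 + κ)
  have h2 := Real.continuous_rpow_const hκ.le
  simp only [dpd_eq]
  fun_prop

theorem hasDerivAt_dpd {κ q : ℝ} (p : ℝ) (hκ : 0 < κ) (hq : q ∈ Ioo (0 : ℝ) 1) :
    HasDerivAt (dpd κ p) ((1 + κ) * (q ^ (κ - 1) + (1 - q) ^ (κ - 1)) * (q - p)) q := by
  have hq₀ : q ≠ 0 := hq.1.ne'
  have hq₁ : 1 - q ≠ 0 := (sub_pos.2 hq.2).ne'
  have hsub : HasDerivAt (fun q : ℝ => 1 - q) (-1) q := by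
    simpa using (hasDerivAt_id q).const_sub 1
  have h := ((((Real.hasDerivAt_rpow_const (p := 1 + κ) (Or.inl hq₀)).sub
      ((Real.hasDerivAt_rpow_const (p := κ) (Or.inl hq₀)).const_mul ((1 + 1 / κ) * p))).add_const
      (1 / κ * p ^ (1 + κ))).add
    (((hsub.rpow_const (p := 1 + κ) (Or.inl hq₁)).sub
      ((hsub.rpow_const (p := κ) (Or.inl hq₁)).const_mul ((1 + 1 / κ) * (1 - p)))).add_const
      (1 / κ * (1 - p) ^ (1 + κ))))
  rw [show dpd κ p = _ from funext (dpd_eq κ p)]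
  refine h.congr_deriv ?_
  rw [show 1 + κ - 1 = (κ - 1) + 1 by ring, Real.rpow_add_one hq₀, Real.rpow_add_one hq₁]
  field_simp
  ring

theorem rpow_mem_Icc_of_mem_Icc {a x e E : ℝ} (ha : 0 < a) (hx : x ∈ Icc a 1)
    (he : e ∈ Icc (-1) E) (hE : 0 ≤ E) : x ^ e ∈ Icc (a ^ E) a⁻¹ := by
  have hx₀ : 0 < x := ha.trans_le hx.1
  constructor
  · calc a ^ E ≤ x ^ E := Real.rpow_le_rpow ha.le hx.1 hE
      _ ≤ x ^ e := Real.rpow_le_rpow_of_exponent_ge hx₀ hx.2 he.2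
  · calc x ^ e ≤ x ^ (-1 : ℝ) := Real.rpow_le_rpow_of_exponent_ge hx₀ hx.2 he.1
      _ ≤ a⁻¹ := by rw [Real.rpow_neg_one]; exact inv_anti₀ ha hx.1

theorem le_dpd_sub_dpd {κ E a p₀ p₁ p₂ : ℝ} (hκ : 0 < κ) (hκE : κ ≤ E) (ha : 0 < a)
    (hp₁ : p₁ ∈ Icc a (1 - a)) (hp₂ : p₂ ∈ Icc a (1 - a)) :
    a ^ E * (p₁ - p₂) ^ 2 - 2 * (1 + E) / a * (|p₂ - p₀| * |p₁ - p₂|)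
      ≤ dpd κ p₀ p₁ - dpd κ p₀ p₂ := by
  have hE : 0 ≤ E := hκ.le.trans hκE
  have hw : ∀ q ∈ Icc a (1 - a), 2 * a ^ E ≤ (1 + κ) * (q ^ (κ - 1) + (1 - q) ^ (κ - 1)) ∧
      (1 + κ) * (q ^ (κ - 1) + (1 - q) ^ (κ - 1)) ≤ 2 * (1 + E) / a := by
    intro q hq
    have he : κ - 1 ∈ Icc (-1) E := ⟨by linarith, by linarith⟩
    have h₁ := rpow_mem_Icc_of_mem_Icc ha ⟨hq.1, by linarith [hq.2]⟩ he hE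
    have h₂ := rpow_mem_Icc_of_mem_Icc (x := 1 - q) ha
      ⟨by linarith [hq.2], by linarith [hq.1]⟩ he hE
    have hpow : 0 ≤ a ^ E := by positivity
    constructor
    · nlinarith [h₁.1, h₂.1]
    · rw [div_eq_mul_inv]
      nlinarith [h₁.2, h₂.2, inv_pos.2 ha]
  have hmem : ∀ q ∈ Icc a (1 - a), q ∈ Ioo (0 : ℝ) 1 := fun q hq =>
    ⟨ha.trans_le hq.1, by linarith [hq.2]⟩
  have := le_sub_of_hasDerivAt_eq_mul_sub (convex_Icc a (1 - a)) hp₁ hp₂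
    (fun q hq => hasDerivAt_dpd p₀ hκ (hmem q hq)) hw (by positivity)
  linarith

theorem abs_sub_le_of_deriv_le {f : ℝ → ℝ} {c : ℝ} (hf : Differentiable ℝ f)
    (hf' : ∀ x, |deriv f x| ≤ c) (x y : ℝ) : |f x - f y| ≤ c * |x - y| :=
  convex_univ.norm_image_sub_le_of_norm_deriv_le (fun z _ => hf z) (fun z _ => hf' z)
    trivial trivial

theorem exists_pos_mul_abs_sub_le_of_deriv_pos {f : ℝ → ℝ} (hf : ContDiff ℝ 1 f)
    (hf' : ∀ x, 0 < deriv f x) {a b : ℝ} (hab : a ≤ b) :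
    ∃ m > 0, ∀ x ∈ Icc a b, ∀ y ∈ Icc a b, m * |x - y| ≤ |f x - f y| := by
  obtain ⟨x₀, -, hx₀⟩ := isCompact_Icc.exists_isMinOn (nonempty_Icc.2 hab)
    (hf.continuous_deriv le_rfl).continuousOn
  have hgrow := (convex_Icc a b).mul_sub_le_image_sub_of_le_deriv hf.continuous.continuousOn
    (hf.differentiable one_ne_zero).differentiableOn (C := deriv f x₀)
    fun x hx => hx₀ (interior_subset hx)
  refine ⟨deriv f x₀, hf' x₀, fun x hx y hy => ?_⟩
  wlog hxy : x ≤ y generalizing x y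
  · rw [abs_sub_comm x, abs_sub_comm (f x)]
    exact this y hy x hx (le_of_not_ge hxy)
  have h := hgrow x hx y hy hxy
  have hm := mul_nonneg (hf' x₀).le (sub_nonneg.2 hxy)
  rwa [abs_sub_comm, abs_of_nonneg (sub_nonneg.2 hxy), abs_sub_comm,
    abs_of_nonneg (hm.trans h)]

theorem exists_le_dpd_comp_sub_dpd_comp {H : ℝ → ℝ} {c₀ : ℝ} (hH : ContDiff ℝ 1 H)
    (hH' : ∀ x, 0 < deriv H x) (hc₀ : ∀ x, deriv H x ≤ c₀) (hHrange : range H = Ioo 0 1)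
    (hHmono : Monotone H) {R E : ℝ} (hR : 0 ≤ R) (hE : 0 ≤ E) :
    ∃ η > 0, ∃ L > 0, ∀ κ ∈ Ioc 0 E, ∀ s₀ ∈ Icc (-R) R, ∀ s₁ ∈ Icc (-R) R, ∀ s₂ ∈ Icc (-R) R,
      η * (s₁ - s₂) ^ 2 - L * (|s₂ - s₀| * |s₁ - s₂|)
        ≤ dpd κ (H s₀) (H s₁) - dpd κ (H s₀) (H s₂) := by
  obtain ⟨m, hm, hlow⟩ := exists_pos_mul_abs_sub_le_of_deriv_pos hH hH' (neg_le_self hR)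
  have hlip : ∀ x y, |H x - H y| ≤ c₀ * |x - y| :=
    abs_sub_le_of_deriv_le (hH.differentiable one_ne_zero)
      fun x => (abs_of_pos (hH' x)).trans_le (hc₀ x)
  have hc₀pos : 0 < c₀ := (hH' 0).trans_le (hc₀ 0)
  have hH01 : ∀ x, H x ∈ Ioo (0 : ℝ) 1 := fun x => hHrange ▸ mem_range_self x
  set a := min (H (-R)) (1 - H R)
  have ha : 0 < a := lt_min (hH01 _).1 (sub_pos.2 (hH01 _).2)
  have hmem : ∀ s ∈ Icc (-R) R, H s ∈ Icc a (1 - a) := fun s hs =>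
    ⟨(min_le_left _ _).trans (hHmono hs.1),
      by linarith [min_le_right (H (-R)) (1 - H R), hHmono hs.2]⟩
  refine ⟨a ^ E * m ^ 2, by positivity, 2 * (1 + E) / a * c₀ ^ 2, by positivity, ?_⟩
  intro κ hκ s₀ hs₀ s₁ hs₁ s₂ hs₂
  have hdpd := le_dpd_sub_dpd (p₀ := H s₀) hκ.1 hκ.2 ha (hmem s₁ hs₁) (hmem s₂ hs₂)
  have hsq : m ^ 2 * (s₁ - s₂) ^ 2 ≤ (H s₁ - H s₂) ^ 2 := by
    rw [← sq_abs (s₁ - s₂), ← sq_abs (H s₁ - H s₂), ← mul_pow]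
    exact pow_le_pow_left₀ (by positivity) (hlow s₁ hs₁ s₂ hs₂) 2
  have hcross : |H s₂ - H s₀| * |H s₁ - H s₂| ≤ c₀ ^ 2 * (|s₂ - s₀| * |s₁ - s₂|) :=
    calc |H s₂ - H s₀| * |H s₁ - H s₂| ≤ (c₀ * |s₂ - s₀|) * (c₀ * |s₁ - s₂|) :=
          mul_le_mul (hlip _ _) (hlip _ _) (abs_nonneg _) (by positivity)
      _ = c₀ ^ 2 * (|s₂ - s₀| * |s₁ - s₂|) := by ring
  have hE' : 0 < 2 * (1 + E) / a := by positivity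
  have hpow : 0 < a ^ E := by positivity
  linarith [mul_le_mul_of_nonneg_left hsq hpow.le, mul_le_mul_of_nonneg_left hcross hE'.le]

section Integration

variable {Ω : Type*} [MeasurableSpace Ω] {P : Measure Ω}

theorem integrable_dpd_comp [IsFiniteMeasure P] {κ : ℝ} (hκ : 0 < κ) {f g : Ω → ℝ}
    (hf : Measurable f) (hg : Measurable g) (hf01 : ∀ ω, f ω ∈ Icc 0 1)
    (hg01 : ∀ ω, g ω ∈ Icc 0 1) : Integrable (fun ω => dpd κ (f ω) (g ω)) P := by
  have hK : IsCompact (Icc (0 : ℝ) 1 ×ˢ Icc (0 : ℝ) 1) := isCompact_Icc.prod isCompact_Icc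
  obtain ⟨M, hM⟩ := hK.exists_bound_of_continuousOn (continuous_dpd hκ).continuousOn
  exact .of_bound ((continuous_dpd hκ).measurable.comp (hf.prodMk hg)).aestronglyMeasurable M
    (ae_of_all _ fun ω => hM (f ω, g ω) ⟨hf01 ω, hg01 ω⟩)

theorem integral_abs_le_sqrt_integral_sq [IsProbabilityMeasure P] {u : Ω → ℝ}
    (hu : MemLp u 2 P) : ∫ ω, |u ω| ∂P ≤ √(∫ ω, u ω ^ 2 ∂P) := by
  have hvar := ProbabilityTheory.variance_nonneg (|u|) P
  rw [ProbabilityTheory.variance_eq_sub hu.abs] at hvar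
  refine Real.le_sqrt_of_sq_le ?_
  simpa [Pi.pow_apply, sq_abs] using hvar

theorem mul_integral_sq_sub_le_integral [IsProbabilityMeasure P] {F u : Ω → ℝ} {η K : ℝ}
    (hF : Integrable F P) (hu : MemLp u 2 P) (hK : 0 ≤ K)
    (h : ∀ᵐ ω ∂P, η * u ω ^ 2 - K * |u ω| ≤ F ω) :
    η * ∫ ω, u ω ^ 2 ∂P - K * √(∫ ω, u ω ^ 2 ∂P) ≤ ∫ ω, F ω ∂P := by
  have hu2 : Integrable (fun ω => u ω ^ 2) P := hu.integrable_sq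
  have hu1 : Integrable (fun ω => |u ω|) P := (hu.integrable one_le_two).abs
  calc η * ∫ ω, u ω ^ 2 ∂P - K * √(∫ ω, u ω ^ 2 ∂P)
      ≤ η * ∫ ω, u ω ^ 2 ∂P - K * ∫ ω, |u ω| ∂P := by
        gcongr; exact integral_abs_le_sqrt_integral_sq hu
    _ = ∫ ω, (η * u ω ^ 2 - K * |u ω|) ∂P := by
        rw [integral_sub (hu2.const_mul η) (hu1.const_mul K), integral_const_mul,
          integral_const_mul]
    _ ≤ ∫ ω, F ω ∂P := integral_mono_ae ((hu2.const_mul η).sub (hu1.const_mul K)) hF h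

end Integration

theorem norm_le_of_ae_eq_continuousMap {f : L2} {g : C(Icc (0 : ℝ) 1, ℝ)}
    (hfg : ∀ᵐ t ∂(volume.restrict (Icc (0 : ℝ) 1)), ∀ ht : t ∈ Icc (0 : ℝ) 1, f t = g ⟨t, ht⟩) :
    ‖f‖ ≤ ‖g‖ := by
  have hbound : ∀ᵐ t ∂(volume.restrict (Icc (0 : ℝ) 1)), ‖f t‖ ≤ ‖g‖ := by
    filter_upwards [hfg, ae_restrict_mem measurableSet_Icc] with t h ht
    rw [h ht]
    exact g.norm_coe_le_norm ⟨t, ht⟩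
  have : IsFiniteMeasure (volume.restrict (Icc (0 : ℝ) 1)) := by
    constructor
    simp
  simpa [measureUnivNNReal] using Lp.norm_le_of_ae_bound (norm_nonneg g) hbound

theorem exists_Mpop_sub_Mpop_ge {Ω : Type*} [MeasurableSpace Ω] (P : Measure Ω)
    [IsProbabilityMeasure P] [MeasurableSpace L2] [BorelSpace L2] {H : ℝ → ℝ} {c₀ : ℝ}
    (hH : ContDiff ℝ 1 H) (hH' : ∀ x, 0 < deriv H x) (hc₀ : ∀ x, deriv H x ≤ c₀)
    (hHrange : range H = Ioo 0 1) (hHmono : Monotone H) {X : Ω → L2} (hX : Measurable X)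
    {C : ℝ} (hXC : ∀ᵐ ω ∂P, ‖X ω‖ ≤ C) (g₀ : L2) {E : ℝ} (hE : 0 ≤ E) :
    ∃ η > 0, ∃ L > 0, ∀ κ ∈ Ioc 0 E, ∀ g₁ g₂ : L2, ‖g₁ - g₀‖ ≤ 1 → ‖g₂ - g₀‖ ≤ 1 →
      Mpop P H X g₀ g₁ κ - Mpop P H X g₀ g₂ κ
        ≥ η * predErr P X g₁ g₂ ^ 2 - L * ‖g₂ - g₀‖ * predErr P X g₁ g₂ := by
  wlog hC : 0 < C generalizing C
  · exact this (hXC.mono fun ω h => h.trans (le_max_left C 1)) (by positivity)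
  set R := C * (‖g₀‖ + 1)
  obtain ⟨η, hη, L, hL, hdpd⟩ :=
    exists_le_dpd_comp_sub_dpd_comp hH hH' hc₀ hHrange hHmono (R := R) (by positivity) hE
  refine ⟨η, hη, L * C, by positivity, fun κ hκ g₁ g₂ hg₁ hg₂ => ?_⟩
  have hinner : ∀ g : L2, Measurable fun ω => ⟪X ω, g⟫ := fun g =>
    (continuous_id.inner continuous_const).measurable.comp hX
  have hbound : ∀ g : L2, ∀ᵐ ω ∂P, |⟪X ω, g⟫| ≤ C * ‖g‖ := fun g =>
    hXC.mono fun ω h => (abs_real_inner_le_norm _ _).trans (by gcongr)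
  have hmem : ∀ g : L2, ‖g - g₀‖ ≤ 1 → ∀ᵐ ω ∂P, ⟪X ω, g⟫ ∈ Icc (-R) R := fun g hg =>
    (hbound g).mono fun ω h => abs_le.1 <| h.trans <|
      mul_le_mul_of_nonneg_left (by linarith [norm_le_insert' g g₀]) hC.le
  have hint : ∀ g : L2, Integrable (fun ω => dpd κ (H ⟪X ω, g₀⟫) (H ⟪X ω, g⟫)) P := fun g =>
    integrable_dpd_comp hκ.1 (hH.continuous.measurable.comp (hinner g₀))
      (hH.continuous.measurable.comp (hinner g))
      (fun ω => Ioo_subset_Icc_self (hHrange ▸ mem_range_self _))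
      (fun ω => Ioo_subset_Icc_self (hHrange ▸ mem_range_self _))
  have hu : MemLp (fun ω => ⟪X ω, g₁ - g₂⟫) 2 P :=
    .of_bound (hinner _).aestronglyMeasurable _ (hbound (g₁ - g₂))
  rw [Mpop, Mpop, ← integral_sub (hint g₁) (hint g₂), predErr,
    Real.sq_sqrt (integral_nonneg fun ω => sq_nonneg _), mul_assoc L]
  refine mul_integral_sq_sub_le_integral ((hint g₁).sub (hint g₂)) hu (by positivity) ?_
  filter_upwards [hmem g₀ (by simp), hmem g₁ hg₁, hmem g₂ hg₂, hbound (g₂ - g₀)]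
    with ω h₀ h₁ h₂ hv
  simp only [inner_sub_right] at hv ⊢
  have hcross := mul_le_mul_of_nonneg_right hv (abs_nonneg (⟪X ω, g₁⟫ - ⟪X ω, g₂⟫))
  linarith [hdpd κ hκ _ h₀ _ h₁ _ h₂, mul_le_mul_of_nonneg_left hcross hL.le]

theorem quadratic_minoration_general
    {Ω : Type*} [MeasurableSpace Ω] (P : Measure Ω) [IsProbabilityMeasure P]
    [MeasurableSpace L2] [BorelSpace L2]
    -- the Banach space `B([0,1])` of (A3), used in (A4)
    {B : Type*} [NormedAddCommGroup B] [NormedSpace ℝ B]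
    (ιC : B →ₗ[ℝ] C(Set.Icc (0 : ℝ) 1, ℝ))
    (ιL : B →ₗ[ℝ] L2)
    (hιL : ∀ f : B, ∀ᵐ t ∂(MeasureTheory.volume.restrict (Set.Icc (0 : ℝ) 1)),
      ∀ ht : t ∈ Set.Icc (0 : ℝ) 1, (ιL f : ℝ → ℝ) t = ιC f ⟨t, ht⟩)
    -- the link function: continuously differentiable, strictly increasing bijection
    -- onto (0,1) with H' > 0 everywhere and sup H' ≤ c₀ < ∞
    (H : ℝ → ℝ) (hHsmooth : ContDiff ℝ 1 H) (hHderivpos : ∀ x, 0 < deriv H x)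
    (hHrange : Set.range H = Set.Ioo (0 : ℝ) 1) (hHmono : StrictMono H)
    (c₀ : ℝ) (hc₀ : ∀ x, deriv H x ≤ c₀)
    -- the predictor and the true coefficient function
    (X : Ω → L2) (hX : Measurable X) (β₀ : B)
    -- (A4): approximating subspaces and approximants
    (βtil : ℕ → B)
    (hβtilconv : Tendsto (fun n => ‖ιL (βtil n) - ιL β₀‖) atTop (𝓝 0))
    -- (A5)
    (C : ℝ) (hXbdd : P {ω | ‖X ω‖ ≤ C} = 1)
    -- the tuning parameter
    (κ₀ : ℝ) (hκ₀ : 0 < κ₀) :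
    ∃ δ > (0 : ℝ), ∃ η > (0 : ℝ), ∃ L > (0 : ℝ), ∃ n₀ : ℕ, ∀ n ≥ n₀,
      ∀ β : B, ∀ κ : ℝ, ‖ιC (β - β₀)‖ < δ → |κ - κ₀| < δ →
        Mpop P H X (ιL β₀) (ιL β) κ - Mpop P H X (ιL β₀) (ιL (βtil n)) κ ≥
          η * (predErr P X (ιL β) (ιL (βtil n))) ^ 2
            - L * ‖ιL (βtil n) - ιL β₀‖ * predErr P X (ιL β) (ιL (βtil n)) := by
  have hXC : ∀ᵐ ω ∂P, ‖X ω‖ ≤ C := by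
    rw [ae_iff_measure_eq (measurableSet_le hX.norm measurable_const).nullMeasurableSet,
      hXbdd, measure_univ]
  obtain ⟨η, hη, L, hL, hM⟩ := exists_Mpop_sub_Mpop_ge P hHsmooth hHderivpos hc₀ hHrange
    hHmono.monotone hX hXC (ιL β₀) (E := 2 * κ₀) (by positivity)
  obtain ⟨n₀, hn₀⟩ := eventually_atTop.1 (hβtilconv.eventually (ge_mem_nhds one_pos))
  refine ⟨min 1 (κ₀ / 2), by positivity, η, hη, L, hL, n₀, fun n hn β κ hβ hκ => ?_⟩
  have hβ₁ : ‖ιL β - ιL β₀‖ ≤ 1 := by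
    rw [← map_sub]
    exact (norm_le_of_ae_eq_continuousMap (hιL _)).trans (hβ.le.trans (min_le_left _ _))
  have hκE : κ ∈ Ioc 0 (2 * κ₀) := by
    have := abs_lt.1 hκ
    have := min_le_right 1 (κ₀ / 2)
    constructor <;> linarith
  exact hM κ hκE _ _ hβ₁ (hn₀ n hn)

/-- quadratic minoration of the population divergence, eq. (A13): under
(A4), (A5) and the strengthened smoothness assumptions on the link `H`, there exist
`δ, η, L > 0` and `n₀` such that for all `n ≥ n₀`, all `β` with `‖β − β₀‖_∞ < δ` and all
`κ` with `|κ − κ₀| < δ`,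
`M(β,κ) − M(β̃_{K_n},κ) ≥ η π(β, β̃_{K_n})² − L ‖β̃_{K_n} − β₀‖ π(β, β̃_{K_n})`. -/
theorem quadratic_minoration
    {Ω : Type*} [MeasurableSpace Ω] (P : Measure Ω) [IsProbabilityMeasure P]
    [MeasurableSpace L2] [BorelSpace L2]
    -- the Banach space `B([0,1])` of (A3), used in (A4)
    {B : Type*} [NormedAddCommGroup B] [NormedSpace ℝ B] [CompleteSpace B]
    (ιC : B →ₗ[ℝ] C(Set.Icc (0 : ℝ) 1, ℝ)) (hιCinj : Function.Injective ιC)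
    (c₁ : ℝ) (hc₁ : 0 < c₁) (hembB : ∀ f : B, ‖ιC f‖ ≤ c₁ * ‖f‖)
    (ιL : B →ₗ[ℝ] L2)
    (hιL : ∀ f : B, ∀ᵐ t ∂(MeasureTheory.volume.restrict (Set.Icc (0 : ℝ) 1)),
      ∀ ht : t ∈ Set.Icc (0 : ℝ) 1, (ιL f : ℝ → ℝ) t = ιC f ⟨t, ht⟩)
    -- the link function: continuously differentiable, strictly increasing bijection
    -- onto (0,1) with H' > 0 everywhere and sup H' ≤ c₀ < ∞
    (H : ℝ → ℝ) (hHsmooth : ContDiff ℝ 1 H) (hHderivpos : ∀ x, 0 < deriv H x)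
    (hHrange : Set.range H = Set.Ioo (0 : ℝ) 1) (hHmono : StrictMono H)
    (c₀ : ℝ) (hc₀ : ∀ x, deriv H x ≤ c₀)
    -- the predictor and the true coefficient function
    (X : Ω → L2) (hX : Measurable X) (β₀ : B)
    -- (A4): approximating subspaces and approximants
    (K : ℕ → ℕ) (Θ : ℕ → Submodule ℝ B)
    (hdim : ∀ n, Module.finrank ℝ (Θ n) ≤ K n)
    (hK : ∃ γ ∈ Set.Ioo (0 : ℝ) 1, ∃ a b : ℝ, 0 < a ∧ 0 < b ∧
      ∀ n : ℕ, 1 ≤ n → a * (n : ℝ) ^ γ ≤ (K n : ℝ) ∧ (K n : ℝ) ≤ b * (n : ℝ) ^ γ)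
    (βtil : ℕ → B) (hβtilmem : ∀ n, βtil n ∈ Θ n)
    (hβtilmin : ∀ n, ∀ β ∈ Θ n, ‖ιL (βtil n) - ιL β₀‖ ≤ ‖ιL β - ιL β₀‖)
    (hβtilconv : Tendsto (fun n => ‖ιL (βtil n) - ιL β₀‖) atTop (𝓝 0))
    -- (A5)
    (C : ℝ) (hXbdd : P {ω | ‖X ω‖ ≤ C} = 1)
    (c₂ : ℝ) (hc₂ : c₂ ∈ Set.Ico (0 : ℝ) 1)
    (hnondeg : ∀ β : B, β ≠ 0 → P {ω | ⟪X ω, ιL β⟫ = 0} ≤ ENNReal.ofReal c₂)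
    -- the tuning parameter
    (κ₀ : ℝ) (hκ₀ : 0 < κ₀) :
    ∃ δ > (0 : ℝ), ∃ η > (0 : ℝ), ∃ L > (0 : ℝ), ∃ n₀ : ℕ, ∀ n ≥ n₀,
      ∀ β : B, ∀ κ : ℝ, ‖ιC (β - β₀)‖ < δ → |κ - κ₀| < δ →
        Mpop P H X (ιL β₀) (ιL β) κ - Mpop P H X (ιL β₀) (ιL (βtil n)) κ ≥
          η * (predErr P X (ιL β) (ιL (βtil n))) ^ 2
            - L * ‖ιL (βtil n) - ιL β₀‖ * predErr P X (ιL β) (ιL (βtil n)) :=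
  quadratic_minoration_general P ιC ιL hιL H hHsmooth hHderivpos hHrange hHmono c₀ hc₀ X hX β₀ βtil
    hβtilconv C hXbdd κ₀ hκ₀

end
end
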